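/- Let P_n be the path graph on n ≥ 2 vertices and let k ≥ 1 be an integer. Let t* be the least positive integer t with t·(t+1) ≥ k. Then T_k(P_n) = min(n−1, t*). (In particular, T_k(P_n) = Θ(√k) when k = O(n²), and T_k(P_n) = D = n−1 when k > (n−1)² + (n−1).) -/

import Mathlib

/-!
In `P_n` the ball `B_t(v)` is the interval `[v - t, v + t] ∩ [0, n - 1]`, so it has at least
`min t (n - 1) + 1` vertices, with equality at the endpoint `0`. Hence if `t* ≤ n - 1` then `t*`
is admissible at every vertex, while at `0` every admissible `t` has `t (t + 1) ≥ k`, i.e. `t ≥ t*`;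
the diameter `n - 1` caps both bounds.
-/

open SimpleGraph

/-- The ball of radius `t` around `v`: all vertices at hop distance at most `t` from `v`. -/
def SimpleGraph.hopBall {V : Type*} (G : SimpleGraph V) (v : V) (t : ℕ) : Set V :=
  {w | G.dist v w ≤ t}

/-- The broadcast quality of a vertex `v`:
`T_k(v) = min ({t : t ≥ 1 and t·|B_t(v)| ≥ k} ∪ {D})` where `D` is the diameter. -/
noncomputable def SimpleGraph.broadcastQuality {V : Type*} (G : SimpleGraph V) (k : ℕ)
    (v : V) : ℕ :=
  sInf ({t : ℕ | 1 ≤ t ∧ k ≤ t * (G.hopBall v t).ncard} ∪ {G.diam})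

/-- The broadcast quality of the graph: `T_k(G) = max_v T_k(v)`. -/
noncomputable def SimpleGraph.broadcastQualityGraph {V : Type*} [Fintype V]
    (G : SimpleGraph V) (k : ℕ) : ℕ :=
  Finset.univ.sup (fun v => G.broadcastQuality k v)

namespace SimpleGraph

section BroadcastQuality

variable {V : Type*} (G : SimpleGraph V) (k : ℕ) (v : V)

theorem broadcastQuality_le_diam : G.broadcastQuality k v ≤ G.diam :=
  Nat.sInf_le (Or.inr rfl)

variable {G k v} in
theorem broadcastQuality_le {t : ℕ} (ht : 1 ≤ t) (hk : k ≤ t * (G.hopBall v t).ncard) :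
    G.broadcastQuality k v ≤ t :=
  Nat.sInf_le (Or.inl ⟨ht, hk⟩)

variable {G k v} in
theorem le_broadcastQuality {m : ℕ} (hdiam : m ≤ G.diam)
    (h : ∀ t, 1 ≤ t → k ≤ t * (G.hopBall v t).ncard → m ≤ t) :
    m ≤ G.broadcastQuality k v := by
  refine le_csInf ⟨G.diam, Or.inr rfl⟩ ?_
  rintro t (⟨ht, hk⟩ | rfl)
  exacts [h t ht hk, hdiam]

end BroadcastQuality

section PathGraph

variable {n : ℕ}

theorem natDist_le_length_of_pathGraph {a b : Fin n} (p : (pathGraph n).Walk a b) :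
    Nat.dist a b ≤ p.length := by
  induction p with
  | nil => simp
  | cons h p ih =>
    rw [pathGraph_adj] at h
    simp only [Walk.length_cons]
    unfold Nat.dist at *
    omega

theorem pathGraph_dist_add_le (a : Fin n) (d : ℕ) (h : a + d < n) :
    (pathGraph n).dist a ⟨a + d, h⟩ ≤ d := by
  induction d with
  | zero => simp
  | succ d ih =>
    have hd : a + d < n := by omega
    have hadj : (pathGraph n).Adj ⟨a + d, hd⟩ ⟨a + (d + 1), h⟩ := by
      rw [pathGraph_adj]; simp only; omega
    calc (pathGraph n).dist a ⟨a + (d + 1), h⟩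
        ≤ (pathGraph n).dist a ⟨a + d, hd⟩ + (pathGraph n).dist ⟨a + d, hd⟩ ⟨a + (d + 1), h⟩ :=
          (pathGraph_preconnected n a _).dist_triangle_left _
      _ ≤ d + 1 := add_le_add (ih hd) (dist_eq_one_iff_adj.mpr hadj).le

theorem pathGraph_dist (a b : Fin n) : (pathGraph n).dist a b = Nat.dist a b := by
  refine le_antisymm ?_ ?_
  · wlog hab : a ≤ b generalizing a b
    · rw [dist_comm, Nat.dist_comm]
      exact this b a (le_of_not_ge hab)
    have hb : a + (b - a : ℕ) < n := by omega
    have := pathGraph_dist_add_le a (b - a) hb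
    rw [show (⟨a + (b - a : ℕ), hb⟩ : Fin n) = b by ext; simp only; omega] at this
    rw [Nat.dist_eq_sub_of_le hab]
    exact this
  · obtain ⟨p, hp⟩ := (pathGraph_preconnected n a b).exists_walk_length_eq_dist
    exact hp ▸ natDist_le_length_of_pathGraph p

theorem pathGraph_diam (n : ℕ) : (pathGraph n).diam = n - 1 := by
  cases n with
  | zero => exact diam_eq_zero.mpr (Or.inr inferInstance)
  | succ m =>
    have hfin := (connected_iff_ediam_ne_top.mp (pathGraph_connected m))
    obtain ⟨u, v, huv⟩ := (pathGraph (m + 1)).exists_dist_eq_diam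
    have hlast := dist_le_diam hfin (u := 0) (v := Fin.last m)
    rw [pathGraph_dist] at huv hlast
    unfold Nat.dist at huv hlast
    simp only [Fin.val_zero, Fin.val_last] at hlast
    omega

theorem pathGraph_hopBall_ncard (v : Fin n) (t : ℕ) :
    ((pathGraph n).hopBall v t).ncard = min (v + t) (n - 1) + 1 - (v - t) := by
  have hlo : v - t < n := by omega
  have hhi : min (v + t) (n - 1) < n := by omega
  have hball : (pathGraph n).hopBall v t =
      ↑(Finset.Icc (⟨v - t, hlo⟩ : Fin n) ⟨min (v + t) (n - 1), hhi⟩) := by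
    ext w
    simp only [hopBall, Set.mem_ofPred_eq, Finset.coe_Icc, Set.mem_Icc, Fin.le_def, pathGraph_dist,
      Nat.dist]
    omega
  rw [hball, Set.ncard_coe_finset, Fin.card_Icc]

end PathGraph

end SimpleGraph

theorem pathGraph_Tk_general (n : ℕ) (k : ℕ)
    (tstar : ℕ) (ht1 : 1 ≤ tstar) (ht2 : k ≤ tstar * (tstar + 1))
    (htmin : ∀ t : ℕ, 1 ≤ t → k ≤ t * (t + 1) → tstar ≤ t) :
    (pathGraph n).broadcastQualityGraph k = min (n - 1) tstar := by
  rcases Nat.eq_zero_or_pos n with rfl | hn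
  · simp [broadcastQualityGraph]
  refine le_antisymm (Finset.sup_le fun v _ => ?_) ?_
  · rcases le_total tstar (n - 1) with h | h
    · have hball : tstar + 1 ≤ ((pathGraph n).hopBall v tstar).ncard := by
        rw [pathGraph_hopBall_ncard]; omega
      exact (broadcastQuality_le ht1 (ht2.trans (Nat.mul_le_mul_left tstar hball))).trans_eq
        (min_eq_right h).symm
    · exact ((pathGraph n).broadcastQuality_le_diam k v).trans_eq
        ((pathGraph_diam n).trans (min_eq_left h).symm)
  · -- The endpoint `0` has the smallest balls, so it realises the maximum.
    refine le_trans ?_ (Finset.le_sup (Finset.mem_univ (⟨0, hn⟩ : Fin n)))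
    refine le_broadcastQuality ((min_le_left _ _).trans (pathGraph_diam n).ge) fun t ht hk => ?_
    have hball : ((pathGraph n).hopBall ⟨0, hn⟩ t).ncard ≤ t + 1 := by
      rw [pathGraph_hopBall_ncard]; simp only; omega
    exact (min_le_right _ _).trans (htmin t ht (hk.trans (Nat.mul_le_mul_left t hball)))

theorem pathGraph_Tk (n : ℕ) (hn : 2 ≤ n) (k : ℕ) (hk : 1 ≤ k)
    (tstar : ℕ) (ht1 : 1 ≤ tstar) (ht2 : k ≤ tstar * (tstar + 1))
    (htmin : ∀ t : ℕ, 1 ≤ t → k ≤ t * (t + 1) → tstar ≤ t) :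
    (pathGraph n).broadcastQualityGraph k = min (n - 1) tstar :=
  pathGraph_Tk_general n k tstar ht1 ht2 htmin
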